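/- Let S be a finite set of points in general position, p ∈ S, and let A be the line arrangement spanned by all lines through pairs of points of S \ {p}. If q and q' are two points lying in the same open cell of A (and S \ {p} ∪ {q}, S \ {p} ∪ {q'} are in general position), then rcr(S \ {p} ∪ {q}) = rcr(S \ {p} ∪ {q'}). -/

import Mathlib

/-!
Write `T = S \ {p}`. For distinct `a, b ∈ T` the orientation of `(a, b, x)` is a continuous
function of `x` vanishing exactly on the line `ab`, so it has constant sign on every cell of the
arrangement: `q` and `q'` lie on the same side of every line spanned by `T`. Hence the
transposition `q ↔ q'` maps `T ∪ {q}` onto `T ∪ {q'}` preserving the orientation of every triple.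
For points in general position two edges cross iff each separates the endpoints of the other,
a condition on orientations only, so the transposition is a bijection between crossing pairs.
-/

open Filter Set

noncomputable section

abbrev Pt : Type := ℝ × ℝ

/-- Signed area determinant of two vectors in the plane. -/
def det2 (u v : Pt) : ℝ := u.1 * v.2 - u.2 * v.1

/-- A finite point set is in general position if no three of its points are collinear. -/
def GenPos (S : Finset Pt) : Prop :=
  ∀ a ∈ S, ∀ b ∈ S, ∀ c ∈ S, a ≠ b → a ≠ c → b ≠ c →
    ¬ Collinear ℝ ({a, b, c} : Set Pt)

/-- Two closed segments cross iff their relative interiors meet. -/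
def SegCross (e f : Sym2 Pt) : Prop :=
  ∃ a b c d : Pt, e = s(a, b) ∧ f = s(c, d) ∧
    (openSegment ℝ a b ∩ openSegment ℝ c d).Nonempty

/-- `e` is an edge of the complete rectilinear drawing on `S`. -/
def IsEdgeOf (S : Finset Pt) (e : Sym2 Pt) : Prop :=
  ∃ a b : Pt, a ∈ S ∧ b ∈ S ∧ a ≠ b ∧ e = s(a, b)

/-- The number of pairs of edges that cross in the rectilinear drawing of the
complete graph with vertex set `S`. -/
def rcrSet (S : Finset Pt) : ℕ :=
  Set.ncard { q : Sym2 (Sym2 Pt) | ∃ e f : Sym2 Pt,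
    q = s(e, f) ∧ e ≠ f ∧ IsEdgeOf S e ∧ IsEdgeOf S f ∧ SegCross e f }

/-- The line through `a` with direction `v`. -/
def lineThrough (a v : Pt) : Set Pt := {x | det2 v (x - a) = 0}

/-- The union of all lines spanned by pairs of points of `S \ {p}`. -/
def arrangement (S : Finset Pt) (p : Pt) : Set Pt :=
  { x : Pt | ∃ a ∈ S.erase p, ∃ b ∈ S.erase p, a ≠ b ∧ x ∈ lineThrough a (b - a) }

open SignType (sign)

-- `orient a b x = 0` unfolds to `x ∈ lineThrough a (b - a)`.
def orient (a b c : Pt) : ℝ := det2 (b - a) (c - a)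

lemma orient_cycle (a b c : Pt) : orient a b c = orient b c a := by
  simp only [orient, det2, Prod.fst_sub, Prod.snd_sub]; ring

@[simp] lemma orient_self_left (a c : Pt) : orient a a c = 0 := by simp [orient, det2]

@[simp] lemma orient_self_right (a b : Pt) : orient a b b = 0 := by simp [orient, det2]; ring

@[simp] lemma orient_self_outer (a b : Pt) : orient a b a = 0 := by simp [orient, det2]

lemma orient_lineMap (a b c d : Pt) (t : ℝ) :
    orient c d (AffineMap.lineMap a b t) = (1 - t) * orient c d a + t * orient c d b := by
  simp only [orient, det2, AffineMap.lineMap_apply_module, Prod.fst_sub, Prod.snd_sub,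
    Prod.fst_add, Prod.snd_add, Prod.smul_fst, Prod.smul_snd, smul_eq_mul]
  ring

lemma continuous_orient (a b : Pt) : Continuous (orient a b) := by
  unfold orient det2; fun_prop

lemma exists_eq_smul_of_det2_eq_zero {u v : Pt} (hu : u ≠ 0) (h : det2 u v = 0) :
    ∃ s : ℝ, v = s • u := by
  unfold det2 at h
  by_cases h1 : u.1 = 0
  · have h2 : u.2 ≠ 0 := fun h2 => hu (Prod.ext h1 h2)
    refine ⟨v.2 / u.2, Prod.ext ?_ ?_⟩
    · simp only [h1, zero_mul, zero_sub, neg_eq_zero, mul_eq_zero, h2, false_or] at h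
      simp [h1, h]
    · simp [h2]
  · refine ⟨v.1 / u.1, Prod.ext ?_ ?_⟩
    · simp [h1]
    · simp only [Prod.smul_snd, smul_eq_mul]
      field_simp
      linarith

lemma collinear_of_orient_eq_zero {a b c : Pt} (h : orient a b c = 0) :
    Collinear ℝ ({a, b, c} : Set Pt) := by
  rcases eq_or_ne a b with rfl | hab
  · simpa using collinear_pair ℝ a c
  obtain ⟨s, hs⟩ := exists_eq_smul_of_det2_eq_zero (sub_ne_zero.2 hab.symm) h
  have hc : c ∈ line[ℝ, a, b] := by
    simpa [← hs] using smul_vsub_vadd_mem_affineSpan_pair s a b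
  have h := collinear_insert_of_mem_affineSpan_pair hc
  rwa [Set.insert_comm, Set.pair_comm] at h

lemma GenPos.orient_ne_zero {U : Finset Pt} (hU : GenPos U) {x y z : Pt} (hx : x ∈ U)
    (hy : y ∈ U) (hz : z ∈ U) (hxy : x ≠ y) (hxz : x ≠ z) (hyz : y ≠ z) : orient x y z ≠ 0 :=
  fun h => hU x hx y hy z hz hxy hxz hyz (collinear_of_orient_eq_zero h)

lemma orient_eq_zero_of_mem_openSegment {c d x : Pt} (hx : x ∈ openSegment ℝ c d) :
    orient c d x = 0 := by
  rw [openSegment_eq_image_lineMap] at hx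
  obtain ⟨u, -, rfl⟩ := hx
  simp [orient_lineMap]

lemma mul_neg_of_orient_eq_zero_of_mem_openSegment {a b c d x : Pt}
    (hx : x ∈ openSegment ℝ a b) (hx0 : orient c d x = 0) (ha : orient c d a ≠ 0) :
    orient c d a * orient c d b < 0 := by
  rw [openSegment_eq_image_lineMap] at hx
  obtain ⟨t, ⟨ht0, ht1⟩, rfl⟩ := hx
  rw [orient_lineMap] at hx0
  have hmul : t * (orient c d a * orient c d b) = -((1 - t) * orient c d a ^ 2) := by
    linear_combination orient c d a * hx0
  have hA2 : 0 < orient c d a ^ 2 := by positivity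
  nlinarith

lemma div_sub_mem_Ioo_of_mul_neg {A B : ℝ} (h : A * B < 0) : A / (A - B) ∈ Ioo 0 1 := by
  rcases mul_neg_iff.1 h with ⟨hA, hB⟩ | ⟨hA, hB⟩
  · exact ⟨div_pos hA (by linarith), (div_lt_one (by linarith)).2 (by linarith)⟩
  · exact ⟨div_pos_of_neg_of_neg hA (by linarith),
      (div_lt_one_of_neg (by linarith)).2 (by linarith)⟩

lemma openSegment_inter_nonempty_iff {a b c d : Pt} (hc : orient a b c ≠ 0)
    (ha : orient c d a ≠ 0) :
    (openSegment ℝ a b ∩ openSegment ℝ c d).Nonempty ↔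
      orient c d a * orient c d b < 0 ∧ orient a b c * orient a b d < 0 := by
  refine ⟨fun ⟨x, hab, hcd⟩ => ⟨?_, ?_⟩, fun ⟨hA, hC⟩ => ?_⟩
  · exact mul_neg_of_orient_eq_zero_of_mem_openSegment hab
      (orient_eq_zero_of_mem_openSegment hcd) ha
  · exact mul_neg_of_orient_eq_zero_of_mem_openSegment hcd
      (orient_eq_zero_of_mem_openSegment hab) hc
  simp only [openSegment_eq_image_lineMap]
  refine ⟨_, ⟨_, div_sub_mem_Ioo_of_mul_neg hA, rfl⟩, ⟨_, div_sub_mem_Ioo_of_mul_neg hC, ?_⟩⟩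
  -- The crossing point: since `A - B = D - C` and `A • b - B • a = D • c - C • d`, the point of
  -- `ab` with parameter `A / (A - B)` is the point of `cd` with parameter `C / (C - D)`.
  set A := orient c d a
  set B := orient c d b
  set C := orient a b c
  set D := orient a b d
  have hAB : A - B ≠ 0 := by
    intro h; rw [sub_eq_zero.1 h] at hA; exact (mul_self_nonneg B).not_gt hA
  have hCD : C - D ≠ 0 := by
    intro h; rw [sub_eq_zero.1 h] at hC; exact (mul_self_nonneg D).not_gt hC
  have hsum : A - B + C - D = 0 := by
    simp only [A, B, C, D, orient, det2, Prod.fst_sub, Prod.snd_sub]; ring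
  have hvec : A • b - B • a + C • d - D • c = 0 := by
    ext <;> simp only [A, B, C, D, orient, det2, Prod.fst_sub, Prod.snd_sub, Prod.fst_add,
      Prod.snd_add, Prod.smul_fst, Prod.smul_snd, smul_eq_mul, Prod.fst_zero, Prod.snd_zero] <;>
      ring
  have h1 := congrArg Prod.fst hvec
  have h2 := congrArg Prod.snd hvec
  simp only [Prod.fst_sub, Prod.snd_sub, Prod.fst_add, Prod.snd_add,
      Prod.smul_fst, Prod.smul_snd, smul_eq_mul, Prod.fst_zero, Prod.snd_zero] at h1 h2
  ext <;> simp only [AffineMap.lineMap_apply_module, Prod.fst_add, Prod.snd_add, Prod.smul_fst,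
    Prod.smul_snd, smul_eq_mul] <;> field_simp
  · linear_combination (A - B) * h1 - (A * b.1 - B * a.1) * hsum
  · linear_combination (A - B) * h2 - (A * b.2 - B * a.2) * hsum

lemma collinear_of_openSegment_inter_openSegment_nonempty {a b d : Pt}
    (h : (openSegment ℝ a b ∩ openSegment ℝ a d).Nonempty) :
    Collinear ℝ ({a, b, d} : Set Pt) := by
  obtain ⟨x, hab, had⟩ := h
  rw [openSegment_eq_image_lineMap] at hab
  obtain ⟨t, ⟨ht0, -⟩, rfl⟩ := hab
  have h := orient_eq_zero_of_mem_openSegment had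
  rw [orient_lineMap, orient_self_outer, mul_zero, zero_add, mul_eq_zero] at h
  have hcol := collinear_of_orient_eq_zero (h.resolve_left ht0.ne')
  rwa [Set.pair_comm] at hcol

lemma mul_neg_iff_of_sign_eq {α : Type*} [Ring α] [LinearOrder α] [IsStrictOrderedRing α]
    {a b a' b' : α} (ha : sign a' = sign a) (hb : sign b' = sign b) :
    a' * b' < 0 ↔ a * b < 0 := by
  rw [← sign_eq_neg_one_iff, ← sign_eq_neg_one_iff, sign_mul, sign_mul, ha, hb]

lemma segCross_mk_iff {a b c d : Pt} :
    SegCross s(a, b) s(c, d) ↔ (openSegment ℝ a b ∩ openSegment ℝ c d).Nonempty := by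
  refine ⟨fun ⟨a', b', c', d', he, hf, h⟩ => ?_, fun h => ⟨a, b, c, d, rfl, rfl, h⟩⟩
  rcases Sym2.eq_iff.1 he with ⟨rfl, rfl⟩ | ⟨rfl, rfl⟩ <;>
    rcases Sym2.eq_iff.1 hf with ⟨rfl, rfl⟩ | ⟨rfl, rfl⟩ <;>
    simpa only [openSegment_symm] using h

lemma GenPos.ne_of_openSegment_inter_nonempty {U : Finset Pt} (hU : GenPos U) {a b c d : Pt}
    (ha : a ∈ U) (hb : b ∈ U) (hd : d ∈ U) (hab : a ≠ b) (hcd : c ≠ d)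
    (hef : s(a, b) ≠ s(c, d)) (h : (openSegment ℝ a b ∩ openSegment ℝ c d).Nonempty) :
    a ≠ c := by
  rintro rfl
  have hbd : b ≠ d := by rintro rfl; exact hef rfl
  exact hU a ha b hb d hd hab hcd hbd (collinear_of_openSegment_inter_openSegment_nonempty h)

def crossingPairs (U : Finset Pt) : Set (Sym2 (Sym2 Pt)) :=
  {Q | ∃ e f : Sym2 Pt, Q = s(e, f) ∧ e ≠ f ∧ IsEdgeOf U e ∧ IsEdgeOf U f ∧ SegCross e f}

section Transport

variable {U U' : Finset Pt} {f : Pt → Pt}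

lemma GenPos.segCross_map (hU : GenPos U)
    (hsign : ∀ x ∈ U, ∀ y ∈ U, ∀ z ∈ U, sign (orient (f x) (f y) (f z)) = sign (orient x y z))
    {a b c d : Pt} (ha : a ∈ U) (hb : b ∈ U) (hc : c ∈ U) (hd : d ∈ U) (hab : a ≠ b)
    (hcd : c ≠ d) (hef : s(a, b) ≠ s(c, d)) (h : SegCross s(a, b) s(c, d)) :
    SegCross s(f a, f b) s(f c, f d) := by
  rw [segCross_mk_iff] at h ⊢
  have hac : a ≠ c := hU.ne_of_openSegment_inter_nonempty ha hb hd hab hcd hef h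
  have had : a ≠ d := hU.ne_of_openSegment_inter_nonempty ha hb hc hab hcd.symm
    (by rwa [Sym2.eq_swap (a := d)]) (by rwa [openSegment_symm ℝ d c])
  have hbc : b ≠ c := hU.ne_of_openSegment_inter_nonempty hb ha hd hab.symm hcd
    (by rwa [Sym2.eq_swap (a := b)]) (by rwa [openSegment_symm ℝ b a])
  have hbd : b ≠ d := hU.ne_of_openSegment_inter_nonempty hb ha hc hab.symm hcd.symm
    (by rwa [Sym2.eq_swap (a := b), Sym2.eq_swap (a := d)])
    (by rwa [openSegment_symm ℝ b a, openSegment_symm ℝ d c])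
  have hC := hU.orient_ne_zero ha hb hc hab hac hbc
  have hA := hU.orient_ne_zero hc hd ha hcd hac.symm had.symm
  rw [openSegment_inter_nonempty_iff hC hA] at h
  rw [openSegment_inter_nonempty_iff (by rwa [← sign_ne_zero, hsign a ha b hb c hc, sign_ne_zero])
    (by rwa [← sign_ne_zero, hsign c hc d hd a ha, sign_ne_zero]),
    mul_neg_iff_of_sign_eq (hsign c hc d hd a ha) (hsign c hc d hd b hb),
    mul_neg_iff_of_sign_eq (hsign a ha b hb c hc) (hsign a ha b hb d hd)]
  exact h

lemma GenPos.map_mem_crossingPairs (hU : GenPos U) (hf : Function.Injective f)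
    (hmaps : ∀ x ∈ U, f x ∈ U')
    (hsign : ∀ x ∈ U, ∀ y ∈ U, ∀ z ∈ U, sign (orient (f x) (f y) (f z)) = sign (orient x y z))
    {Q : Sym2 (Sym2 Pt)} (hQ : Q ∈ crossingPairs U) :
    Sym2.map (Sym2.map f) Q ∈ crossingPairs U' := by
  obtain ⟨_, _, rfl, hef, ⟨a, b, ha, hb, hab, rfl⟩, ⟨c, d, hc, hd, hcd, rfl⟩, hcross⟩ := hQ
  refine ⟨s(f a, f b), s(f c, f d), by simp, ?_,
    ⟨f a, f b, hmaps a ha, hmaps b hb, hf.ne hab, rfl⟩,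
    ⟨f c, f d, hmaps c hc, hmaps d hd, hf.ne hcd, rfl⟩,
    hU.segCross_map hsign ha hb hc hd hab hcd hef hcross⟩
  simpa using (Sym2.map.injective hf).ne hef

theorem rcrSet_eq_of_equiv (σ : Pt ≃ Pt) (hU : GenPos U) (hU' : GenPos U')
    (hmaps : ∀ x, σ x ∈ U' ↔ x ∈ U)
    (hsign : ∀ x ∈ U, ∀ y ∈ U, ∀ z ∈ U, sign (orient (σ x) (σ y) (σ z)) = sign (orient x y z)) :
    rcrSet U = rcrSet U' := by
  have hmaps' : ∀ x ∈ U', σ.symm x ∈ U := fun x hx => (hmaps _).1 (by simpa)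
  have hsign' : ∀ x ∈ U', ∀ y ∈ U', ∀ z ∈ U',
      sign (orient (σ.symm x) (σ.symm y) (σ.symm z)) = sign (orient x y z) := by
    intro x hx y hy z hz
    simpa using (hsign _ (hmaps' x hx) _ (hmaps' y hy) _ (hmaps' z hz)).symm
  have himage : Sym2.map (Sym2.map σ) '' crossingPairs U = crossingPairs U' := by
    refine Subset.antisymm (image_subset_iff.2 fun Q hQ => ?_) fun Q hQ => ?_
    · exact hU.map_mem_crossingPairs σ.injective (fun x hx => (hmaps x).2 hx) hsign hQ
    · exact ⟨_, hU'.map_mem_crossingPairs σ.symm.injective hmaps' hsign' hQ,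
        by simp [Sym2.map_map]⟩
  change (crossingPairs U).ncard = (crossingPairs U').ncard
  rw [← himage, ncard_image_of_injective _ (Sym2.map.injective (Sym2.map.injective σ.injective))]

lemma sign_orient_map_insert {T : Finset Pt} {q : Pt} (hfix : ∀ x ∈ T, f x = x)
    (hq : ∀ a ∈ T, ∀ b ∈ T, sign (orient a b (f q)) = sign (orient a b q)) :
    ∀ x ∈ insert q T, ∀ y ∈ insert q T, ∀ z ∈ insert q T,
      sign (orient (f x) (f y) (f z)) = sign (orient x y z) := by
  intro x hx y hy z hz
  rcases Finset.mem_insert.1 hx with hx | hx <;> rcases Finset.mem_insert.1 hy with hy | hy <;>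
    rcases Finset.mem_insert.1 hz with hz | hz
  · rw [hx, hy]; simp
  · rw [hx, hy]; simp
  · rw [hx, hz]; simp
  · rw [hx, hfix y hy, hfix z hz, orient_cycle (f q), orient_cycle q]
    exact hq y hy z hz
  · rw [hy, hz]; simp
  · rw [hy, hfix x hx, hfix z hz, orient_cycle x (f q), orient_cycle (f q), orient_cycle x q,
      orient_cycle q]
    exact hq z hz x hx
  · rw [hz, hfix x hx, hfix y hy]
    exact hq x hx y hy
  · rw [hfix x hx, hfix y hy, hfix z hz]

end Transport

lemma rcrSet_eq_zero_of_card_le_two {U : Finset Pt} (hU : U.card ≤ 2) : rcrSet U = 0 := by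
  change (crossingPairs U).ncard = 0
  rw [show crossingPairs U = ∅ from eq_empty_of_forall_notMem ?_, ncard_empty]
  rintro _ ⟨_, _, rfl, hef, ⟨a, b, ha, hb, hab, rfl⟩, ⟨c, d, hc, hd, hcd, rfl⟩, -⟩
  have hU : {c, d} = U := Finset.eq_of_subset_of_card_le
    (Finset.insert_subset_iff.2 ⟨hc, Finset.singleton_subset_iff.2 hd⟩)
    (by rwa [Finset.card_pair hcd])
  have hmem : ∀ x ∈ U, x ∈ s(c, d) := fun x hx => by
    rw [← hU] at hx
    simpa using hx
  exact hef ((Sym2.mem_and_mem_iff hab).1 ⟨hmem a ha, hmem b hb⟩).symm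

lemma swap_mem_insert_iff {α : Type*} [DecidableEq α] {T : Finset α} {q q' : α} (hq : q ∉ T)
    (hq' : q' ∉ T) (x : α) : Equiv.swap q q' x ∈ insert q' T ↔ x ∈ insert q T := by
  rcases eq_or_ne x q with rfl | hxq
  · simp
  rcases eq_or_ne x q' with rfl | hxq'
  · simp [hq, hq', hxq, hxq.symm]
  rw [Equiv.swap_apply_of_ne_of_ne hxq hxq']
  simp [hxq, hxq']

lemma IsPreconnected.sign_eq_of_ne_zero {X : Type*} [TopologicalSpace X] {s : Set X}
    (hs : IsPreconnected s) {g : X → ℝ} (hg : ContinuousOn g s) (hne : ∀ x ∈ s, g x ≠ 0)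
    {x y : X} (hx : x ∈ s) (hy : y ∈ s) : sign (g x) = sign (g y) := by
  have h0 : (0 : ℝ) ∉ uIcc (g x) (g y) := fun h => by
    obtain ⟨z, hz, hz0⟩ := (hs.image g hg).ordConnected.uIcc_subset (mem_image_of_mem g hx)
      (mem_image_of_mem g hy) h
    exact hne z hz hz0
  rw [mem_uIcc] at h0
  rcases (hne x hx).lt_or_gt with h1 | h1 <;> rcases (hne y hy).lt_or_gt with h2 | h2
  · rw [sign_neg h1, sign_neg h2]
  · exact absurd (Or.inl ⟨h1.le, h2.le⟩) h0
  · exact absurd (Or.inr ⟨h2.le, h1.le⟩) h0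
  · rw [sign_pos h1, sign_pos h2]

lemma sign_orient_eq_of_mem_connectedComponentIn {S : Finset Pt} {p q q' : Pt}
    (hq : q ∈ (arrangement S p)ᶜ) (hq' : q' ∈ connectedComponentIn (arrangement S p)ᶜ q)
    {a b : Pt} (ha : a ∈ S.erase p) (hb : b ∈ S.erase p) :
    sign (orient a b q') = sign (orient a b q) := by
  rcases eq_or_ne a b with rfl | hab
  · simp
  refine isPreconnected_connectedComponentIn.sign_eq_of_ne_zero
    (continuous_orient a b).continuousOn (fun x hx h0 => ?_) hq' (mem_connectedComponentIn hq)
  exact connectedComponentIn_subset _ _ hx ⟨a, ha, b, hb, hab, h0⟩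

lemma mem_arrangement_of_mem {S : Finset Pt} {p x : Pt} (hx : x ∈ S.erase p)
    (hcard : 1 < (S.erase p).card) : x ∈ arrangement S p := by
  obtain ⟨y, hy, hyx⟩ := Finset.exists_mem_ne hcard x
  exact ⟨x, hx, y, hy, hyx.symm, by simp [lineThrough, det2]⟩

theorem same_cell_same_crossings_general (S : Finset Pt)
    (p : Pt) (q q' : Pt)
    (hq : q ∈ (arrangement S p)ᶜ) (hq' : q' ∈ (arrangement S p)ᶜ)
    (hcell : connectedComponentIn (arrangement S p)ᶜ q =
      connectedComponentIn (arrangement S p)ᶜ q')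
    (hgpq : GenPos (insert q (S.erase p)))
    (hgpq' : GenPos (insert q' (S.erase p))) :
    rcrSet (insert q (S.erase p)) = rcrSet (insert q' (S.erase p)) := by
  -- With at most one point besides `p` the arrangement is empty and `q` may belong to `S`.
  rcases le_or_gt (S.erase p).card 1 with hsmall | hbig
  · rw [rcrSet_eq_zero_of_card_le_two ((Finset.card_insert_le _ _).trans (by omega)),
      rcrSet_eq_zero_of_card_le_two ((Finset.card_insert_le _ _).trans (by omega))]
  have hqT : q ∉ S.erase p := fun h => hq (mem_arrangement_of_mem h hbig)
  have hq'T : q' ∉ S.erase p := fun h => hq' (mem_arrangement_of_mem h hbig)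
  have hq'q : q' ∈ connectedComponentIn (arrangement S p)ᶜ q :=
    hcell ▸ mem_connectedComponentIn hq'
  refine rcrSet_eq_of_equiv (Equiv.swap q q') hgpq hgpq' (swap_mem_insert_iff hqT hq'T)
    (sign_orient_map_insert (fun x hx => ?_) ?_)
  · exact Equiv.swap_apply_of_ne_of_ne (ne_of_mem_of_not_mem hx hqT)
      (ne_of_mem_of_not_mem hx hq'T)
  · intro a ha b hb
    rw [Equiv.swap_apply_left]
    exact sign_orient_eq_of_mem_connectedComponentIn hq hq'q ha hb

/-- If `q` and `q'` lie in the same open cell of the arrangement of lines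
spanned by `S \ {p}`, then replacing `p` by `q` or by `q'` yields the same
number of crossings. -/
theorem same_cell_same_crossings (S : Finset Pt) (hgp : GenPos S)
    (p : Pt) (hp : p ∈ S) (q q' : Pt)
    (hq : q ∈ (arrangement S p)ᶜ) (hq' : q' ∈ (arrangement S p)ᶜ)
    (hcell : connectedComponentIn (arrangement S p)ᶜ q =
      connectedComponentIn (arrangement S p)ᶜ q')
    (hgpq : GenPos (insert q (S.erase p)))
    (hgpq' : GenPos (insert q' (S.erase p))) :
    rcrSet (insert q (S.erase p)) = rcrSet (insert q' (S.erase p)) :=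
  same_cell_same_crossings_general S p q q' hq hq' hcell hgpq hgpq'
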